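/- arXiv:1103.5599 — 5 statements merged into one kernel-verified Lean document; each statement's English description precedes it below -/
import Mathlib

section
/- Let G = (V,E) be a finite simple graph, let F be a completion of G of minimum cardinality, and let σ be an umbrella ordering of the proper interval graph G + F. Then every extremal edge of σ is an edge of G, i.e., belongs to E and not to F. -/
open SimpleGraph Finset

variable {V : Type*}

/-- `f` is an (injective, hence linear) umbrella ordering of the graph `G`. -/
def IsUmbrellaOrdering (G : SimpleGraph V) (f : V → ℕ) : Prop :=
  Function.Injective f ∧
    ∀ u v w : V, f u < f v → f v < f w → G.Adj u w → G.Adj u v ∧ G.Adj v w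

/-- A graph is a proper interval graph iff it admits an umbrella ordering. -/
def IsProperIntervalGraph (G : SimpleGraph V) : Prop :=
  ∃ f : V → ℕ, IsUmbrellaOrdering G f

/-- The graph `G + F` obtained by adding the set `F` of pairs as edges. -/
def addEdges (G : SimpleGraph V) (F : Finset (Sym2 V)) : SimpleGraph V :=
  G ⊔ SimpleGraph.fromEdgeSet ↑F

/-- `F` is a completion of `G`: a set of non-loop non-edges whose addition
makes `G` a proper interval graph. -/
def IsCompletion (G : SimpleGraph V) (F : Finset (Sym2 V)) : Prop :=
  (∀ e ∈ F, ¬ e.IsDiag) ∧ (∀ e ∈ F, e ∉ G.edgeSet) ∧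
    IsProperIntervalGraph (addEdges G F)

/-- `F` is a `k`-completion of `G`. -/
def IsKCompletion (G : SimpleGraph V) (k : ℕ) (F : Finset (Sym2 V)) : Prop :=
  IsCompletion G F ∧ F.card ≤ k

/-- `uv` is an extremal edge of `G` with respect to the ordering `f`. -/
def IsExtremalEdge (G : SimpleGraph V) (f : V → ℕ) (u v : V) : Prop :=
  G.Adj u v ∧ f u < f v ∧
    ∀ u' v' : V, G.Adj u' v' → f u' ≤ f u → f v ≤ f v' → u' = u ∧ v' = v

/-- `c` is the center and `l₁, l₂, l₃` the leaves of an induced claw of `G`. -/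
def IsClaw (G : SimpleGraph V) (c l₁ l₂ l₃ : V) : Prop :=
  G.Adj c l₁ ∧ G.Adj c l₂ ∧ G.Adj c l₃ ∧
    ¬ G.Adj l₁ l₂ ∧ ¬ G.Adj l₁ l₃ ∧ ¬ G.Adj l₂ l₃ ∧ l₁ ≠ l₂ ∧ l₁ ≠ l₃ ∧ l₂ ≠ l₃

/-- `a b c d` is an induced 4-cycle of `G` (in this cyclic order). -/
def IsInducedC4 (G : SimpleGraph V) (a b c d : V) : Prop :=
  G.Adj a b ∧ G.Adj b c ∧ G.Adj c d ∧ G.Adj d a ∧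
    ¬ G.Adj a c ∧ ¬ G.Adj b d ∧ a ≠ c ∧ b ≠ d

/-- `x` belongs to some claw of `G` (as center or leaf). -/
def InClaw (G : SimpleGraph V) (x : V) : Prop :=
  ∃ a b c d, IsClaw G a b c d ∧ (x = a ∨ x = b ∨ x = c ∨ x = d)

/-- `x` belongs to some induced 4-cycle of `G`. -/
def InC4 (G : SimpleGraph V) (x : V) : Prop :=
  ∃ a b c d, IsInducedC4 G a b c d ∧ (x = a ∨ x = b ∨ x = c ∨ x = d)

/-- `{x, y, z}` is an independent set of size 3 (a `3K₁`) of `G`. -/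
def IsInd3 (G : SimpleGraph V) (x y z : V) : Prop :=
  x ≠ y ∧ x ≠ z ∧ y ≠ z ∧ ¬ G.Adj x y ∧ ¬ G.Adj x z ∧ ¬ G.Adj y z

/-- `x` belongs to some independent set of size 3 of `G`. -/
def InInd3 (G : SimpleGraph V) (x : V) : Prop := ∃ y z, IsInd3 G x y z

/-- `G` is sunflower-reduced (for the parameter `k`). -/
def SunflowerReduced (G : SimpleGraph V) (k : ℕ) : Prop :=
  ∀ u v : V, u ≠ v → ¬ G.Adj u v →
    {w : V | ∃ c, IsClaw G c u v w}.ncard ≤ k ∧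
    {e : Sym2 V | ∃ a b, e = s(a, b) ∧ IsInducedC4 G u a v b}.ncard ≤ k

/-- `u` and `v` are true twins of `G`: they have the same closed neighborhood. -/
def TrueTwins (G : SimpleGraph V) (u v : V) : Prop :=
  insert u (G.neighborSet u) = insert v (G.neighborSet v)

/-- `b : Fin p → V` enumerates a `K`-join of `G` whose complement is
partitioned into `N`, `L`, `R`, `C`. -/
structure KJoinWith (G : SimpleGraph V) {p : ℕ} (b : Fin p → V)
    (N L R C : Set V) : Prop where
  inj : Function.Injective b
  clique : ∀ i j : Fin p, i ≠ j → G.Adj (b i) (b j)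
  cover : ∀ v : V, v ∉ Set.range b → v ∈ N ∪ L ∪ R ∪ C
  disj : List.Pairwise Disjoint [Set.range b, N, L, R, C]
  nAdj : ∀ v ∈ N, ∀ i, G.Adj v (b i)
  cNotAdj : ∀ v ∈ C, ∀ i, ¬ G.Adj v (b i)
  lrAdj : ∀ v ∈ L ∪ R, ∃ i, G.Adj v (b i)
  lrNotAll : ∀ v ∈ L ∪ R, ∃ i, ¬ G.Adj v (b i)
  rFirst : ∀ r ∈ R, ∀ i : Fin p, i.val = 0 → ¬ G.Adj r (b i)
  lLast : ∀ x ∈ L, ∀ i : Fin p, i.val = p - 1 → ¬ G.Adj x (b i)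
  rMono : ∀ i j : Fin p, i.val + 1 = j.val → ∀ r ∈ R, G.Adj (b i) r → G.Adj (b j) r
  lMono : ∀ i j : Fin p, i.val + 1 = j.val → ∀ x ∈ L, G.Adj (b j) x → G.Adj (b i) x

/-- `B ⊆ V` is a `K`-join of `G`. -/
def IsKJoin (G : SimpleGraph V) (B : Set V) : Prop :=
  ∃ (p : ℕ) (b : Fin p → V) (N L R C : Set V),
    Set.range b = B ∧ KJoinWith G b N L R C

/-- `B` is a clean `K`-join: none of its vertices belongs to a claw or an
induced 4-cycle of `G`. -/
def IsCleanKJoin (G : SimpleGraph V) (B : Set V) : Prop :=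
  IsKJoin G B ∧ ∀ x ∈ B, ¬ InClaw G x ∧ ¬ InC4 G x

/-- `B ⊆ V` is a simple `K`-join of `G` (one of `L`, `R` is empty). -/
def IsSimpleKJoin (G : SimpleGraph V) (B : Set V) : Prop :=
  ∃ (p : ℕ) (b : Fin p → V) (N L R C : Set V),
    Set.range b = B ∧ KJoinWith G b N L R C ∧ (L = ∅ ∨ R = ∅)

/-- `B` is bcc-clean: none of its vertices belongs to a `3K₁` or an induced
4-cycle of `G`. -/
def IsBccClean (G : SimpleGraph V) (B : Set V) : Prop :=
  ∀ x ∈ B, ¬ InInd3 G x ∧ ¬ InC4 G x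

/-- `b : Fin p → V` enumerates (in umbrella order) a 1-branch of `G` with
complement partitioned into `R`, `C`; `b l` is the neighbor of the last
vertex `b (p-1)` of minimal index.  The attachment clique is
`B₁ = {b i : l ≤ i}` and `B^R = {b i : i < l}`. -/
structure OneBranch (G : SimpleGraph V) {p : ℕ} (b : Fin p → V)
    (R C : Set V) (l : Fin p) : Prop where
  pos : 0 < p
  inj : Function.Injective b
  umbrella : ∀ i j m : Fin p, i < j → j < m → G.Adj (b i) (b m) →
    G.Adj (b i) (b j) ∧ G.Adj (b j) (b m)
  connB : (G.induce (Set.range b)).Connected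
  cover : ∀ v : V, v ∉ Set.range b → v ∈ R ∪ C
  disj : List.Pairwise Disjoint [Set.range b, R, C]
  noBC : ∀ v ∈ C, ∀ i, ¬ G.Adj v (b i)
  rNbr : ∀ v ∈ R, ∃ i, G.Adj v (b i)
  lMin : ∀ j : Fin p, j < l → ¬ G.Adj (b j) (b ⟨p - 1, Nat.sub_lt pos Nat.one_pos⟩)
  lNbr : l.val = p - 1 ∨ G.Adj (b l) (b ⟨p - 1, Nat.sub_lt pos Nat.one_pos⟩)
  noEarlyR : ∀ j : Fin p, j < l → ∀ r ∈ R, ¬ G.Adj r (b j)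
  rMono : ∀ i j : Fin p, l ≤ i → i.val + 1 = j.val → ∀ r ∈ R,
    G.Adj (b i) r → G.Adj (b j) r

/-- `b : Fin p → V` enumerates (in umbrella order) a 2-branch of `G` with
complement partitioned into `L`, `R`, `C`; `b l` is the neighbor of `b (p-1)`
of minimal index and `b l'` is the neighbor of `b 0` of maximal index.  The
attachment cliques are `B₁ = {b i : i ≤ l'}` and `B₂ = {b i : l ≤ i}`, and
`B^R = {b i : l' < i < l}`. -/
structure TwoBranch (G : SimpleGraph V) {p : ℕ} (b : Fin p → V)
    (L R C : Set V) (l l' : Fin p) : Prop where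
  pos : 0 < p
  inj : Function.Injective b
  umbrella : ∀ i j m : Fin p, i < j → j < m → G.Adj (b i) (b m) →
    G.Adj (b i) (b j) ∧ G.Adj (b j) (b m)
  connB : (G.induce (Set.range b)).Connected
  cover : ∀ v : V, v ∉ Set.range b → v ∈ L ∪ R ∪ C
  disj : List.Pairwise Disjoint [Set.range b, L, R, C]
  noBC : ∀ v ∈ C, ∀ i, ¬ G.Adj v (b i)
  lNbrEx : ∀ v ∈ L, ∃ i, G.Adj v (b i)
  rNbrEx : ∀ v ∈ R, ∃ i, G.Adj v (b i)
  lMin : ∀ j : Fin p, j < l → ¬ G.Adj (b j) (b ⟨p - 1, Nat.sub_lt pos Nat.one_pos⟩)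
  lNbr : l.val = p - 1 ∨ G.Adj (b l) (b ⟨p - 1, Nat.sub_lt pos Nat.one_pos⟩)
  lMax' : ∀ j : Fin p, l' < j → ¬ G.Adj (b ⟨0, pos⟩) (b j)
  lNbr' : l'.val = 0 ∨ G.Adj (b ⟨0, pos⟩) (b l')
  noEarlyR : ∀ j : Fin p, j < l → ∀ r ∈ R, ¬ G.Adj r (b j)
  noLateL : ∀ j : Fin p, l' < j → ∀ v ∈ L, ¬ G.Adj v (b j)
  rMono : ∀ i j : Fin p, l ≤ i → i.val + 1 = j.val → ∀ r ∈ R,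
    G.Adj (b i) r → G.Adj (b j) r
  lMono : ∀ i j : Fin p, j ≤ l' → i.val + 1 = j.val → ∀ v ∈ L,
    G.Adj (b j) v → G.Adj (b i) v

/-- `e : Fin q → Fin p` lists the last indices of the `q` K-joins of the
K-join decomposition of the 2-branch enumerated by `b` (with attachment
cliques ending at `l'` resp. starting at `l`). -/
def KJoinDecomp (G : SimpleGraph V) {p : ℕ} (b : Fin p → V) (l l' : Fin p)
    (q : ℕ) (e : Fin q → Fin p) : Prop :=
  0 < q ∧
  (∀ i : Fin q, i.val = 0 → e i = l') ∧
  (∀ i : Fin q, i.val = q - 1 → (e i).val = p - 1) ∧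
  StrictMono e ∧
  ∀ i j : Fin q, i.val + 1 = j.val →
    ∃ hs : (e i).val + 1 < p,
      (j.val + 1 < q →
        (⟨(e i).val + 1, hs⟩ : Fin p) < l ∧
        G.Adj (b ⟨(e i).val + 1, hs⟩) (b (e j)) ∧
        ∀ m : Fin p, G.Adj (b ⟨(e i).val + 1, hs⟩) (b m) → m ≤ e j) ∧
      (j.val + 1 = q → l ≤ (⟨(e i).val + 1, hs⟩ : Fin p))

/-- `G` is a bi-clique chain graph: two cliques joined by a join. -/
def IsBicliqueChain (G : SimpleGraph V) : Prop :=
  ∃ (q : ℕ) (x : Fin q → V) (Y : Set V),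
    Function.Injective x ∧
    Disjoint (Set.range x) Y ∧
    (∀ v : V, v ∈ Set.range x ∨ v ∈ Y) ∧
    (∀ i j : Fin q, i ≠ j → G.Adj (x i) (x j)) ∧
    G.IsClique Y ∧
    (∀ i j : Fin q, i ≤ j → ∀ y ∈ Y, G.Adj (x i) y → G.Adj (x j) y)

/-- `F` is a bcc-`k`-completion of `G`. -/
def IsBccKCompletion (G : SimpleGraph V) (k : ℕ) (F : Finset (Sym2 V)) : Prop :=
  (∀ e ∈ F, ¬ e.IsDiag) ∧ (∀ e ∈ F, e ∉ G.edgeSet) ∧ F.card ≤ k ∧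
    IsBicliqueChain (addEdges G F)

/-- Every extremal edge of an umbrella ordering of `G + F`, for an optimal
completion `F` of `G`, is an edge of `G` (and not an edge of `F`). -/
theorem extremal_edge_of_optimal_completion [Fintype V] (G : SimpleGraph V)
    (F : Finset (Sym2 V)) (hF : IsCompletion G F)
    (hopt : ∀ F' : Finset (Sym2 V), IsCompletion G F' → F.card ≤ F'.card)
    (f : V → ℕ) (hf : IsUmbrellaOrdering (addEdges G F) f) :
    ∀ u v : V, IsExtremalEdge (addEdges G F) f u v →
      G.Adj u v ∧ s(u, v) ∉ F := by
  classical
  intro u v hext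
  obtain ⟨huv, hfuv, hmax⟩ := hext
  have hadjF : ∀ a b : V, (addEdges G F).Adj a b ↔
      (G.Adj a b ∨ (s(a, b) ∈ F ∧ a ≠ b)) := by
    intro a b
    simp [addEdges, SimpleGraph.fromEdgeSet_adj]
  have hmemF : s(u, v) ∉ F := by
    intro hmem
    set F' := F.erase s(u, v) with hF'def
    have hadj' : ∀ a b : V, (addEdges G F').Adj a b ↔
        ((addEdges G F).Adj a b ∧ s(a, b) ≠ s(u, v)) := by
      intro a b
      rw [hadjF]
      constructor
      · intro h
        rcases (by simpa [addEdges, SimpleGraph.fromEdgeSet_adj] using h :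
            G.Adj a b ∨ (s(a, b) ∈ F' ∧ a ≠ b)) with hG | ⟨hm, hne⟩
        · refine ⟨Or.inl hG, ?_⟩
          intro heq
          exact hF.2.1 _ hmem (heq ▸ (G.mem_edgeSet.mpr hG))
        · exact ⟨Or.inr ⟨Finset.mem_of_mem_erase hm, hne⟩,
            Finset.ne_of_mem_erase hm⟩
      · rintro ⟨hG | ⟨hm, hne⟩, hneq⟩
        · exact (by simpa [addEdges] using Or.inl hG :
            (addEdges G F').Adj a b)
        · have : s(a, b) ∈ F' := Finset.mem_erase.mpr ⟨hneq, hm⟩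
          simp only [addEdges, SimpleGraph.sup_adj, SimpleGraph.fromEdgeSet_adj]
          exact Or.inr ⟨by exact_mod_cast this, hne⟩
    have hcomp' : IsCompletion G F' := by
      refine ⟨fun e he => hF.1 e (Finset.mem_of_mem_erase he),
        fun e he => hF.2.1 e (Finset.mem_of_mem_erase he), f, hf.1, ?_⟩
      intro a b c hab hbc hac
      have hacF : (addEdges G F).Adj a c := ((hadj' a c).mp hac).1
      obtain ⟨h1, h2⟩ := hf.2 a b c hab hbc hacF
      constructor
      · rw [hadj']
        refine ⟨h1, ?_⟩
        intro heq
        rcases Sym2.eq_iff.mp heq with ⟨ha, hb⟩ | ⟨ha, hb⟩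
        · subst ha; subst hb
          have := hmax a c hacF le_rfl (le_of_lt hbc)
          exact absurd (this.2 ▸ hbc) (lt_irrefl _)
        · subst ha; subst hb
          exact absurd (hfuv.trans hab) (lt_irrefl _)
      · rw [hadj']
        refine ⟨h2, ?_⟩
        intro heq
        rcases Sym2.eq_iff.mp heq with ⟨hb, hc⟩ | ⟨hb, hc⟩
        · subst hb; subst hc
          have := hmax a c hacF (le_of_lt hab) le_rfl
          exact absurd (this.1 ▸ hab) (lt_irrefl _)
        · subst hb; subst hc
          exact absurd (hfuv.trans hbc) (lt_irrefl _)
    have := hopt F' hcomp'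
    have hlt : F'.card < F.card := Finset.card_erase_lt_of_mem hmem
    omega
  refine ⟨?_, hmemF⟩
  rcases (hadjF u v).mp huv with hG | ⟨hm, _⟩
  · exact hG
  · exact absurd hm hmemF
end

section
/- Let G = (V,E) be a finite simple graph, k a positive integer, and u, v two nonadjacent vertices of G. Suppose there exist m > k claws of G, each having u and v among its leaves, whose third leaves are pairwise distinct. Then every k-completion F of G contains the pair uv. -/
open SimpleGraph Finset

variable {V : Type*}

lemma umbrella_between {G : SimpleGraph V} {f : V → ℕ}
    (hf : IsUmbrellaOrdering G f) {c a b : V} (hca : G.Adj c a) (hcb : G.Adj c b)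
    (hab : ¬ G.Adj a b) (hne : a ≠ b) :
    ¬ (f a < f c ∧ f b < f c) ∧ ¬ (f c < f a ∧ f c < f b) := by
  obtain ⟨hinj, humb⟩ := hf
  constructor
  · rintro ⟨h1, h2⟩
    rcases lt_trichotomy (f a) (f b) with h | h | h
    · exact hab (humb a b c h h2 hca.symm).1
    · exact hne (hinj h)
    · exact hab ((humb b a c h h1 hcb.symm).1).symm
  · rintro ⟨h1, h2⟩
    rcases lt_trichotomy (f a) (f b) with h | h | h
    · exact hab (humb c a b h1 h hcb).2
    · exact hne (hinj h)
    · exact hab (humb c b a h2 h hca).2.symm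

lemma noClaw_of_pig {G : SimpleGraph V} (hpig : IsProperIntervalGraph G)
    {c l₁ l₂ l₃ : V} : ¬ IsClaw G c l₁ l₂ l₃ := by
  rintro ⟨h1, h2, h3, h12, h13, h23, n12, n13, n23⟩
  obtain ⟨f, hf⟩ := hpig
  have b12 := umbrella_between hf h1 h2 h12 n12
  have b13 := umbrella_between hf h1 h3 h13 n13
  have b23 := umbrella_between hf h2 h3 h23 n23
  have hinj := hf.1
  have e1 : f c ≠ f l₁ := fun h => h1.ne (hinj h)
  have e2 : f c ≠ f l₂ := fun h => h2.ne (hinj h)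
  have e3 : f c ≠ f l₃ := fun h => h3.ne (hinj h)
  have e12 : f l₁ ≠ f l₂ := fun h => n12 (hinj h)
  have e13 : f l₁ ≠ f l₃ := fun h => n13 (hinj h)
  have e23 : f l₂ ≠ f l₃ := fun h => n23 (hinj h)
  obtain ⟨p12, q12⟩ := b12
  obtain ⟨p13, q13⟩ := b13
  obtain ⟨p23, q23⟩ := b23
  omega

lemma addEdges_adj {G : SimpleGraph V} {F : Finset (Sym2 V)} {x y : V} :
    (addEdges G F).Adj x y ↔ G.Adj x y ∨ (s(x, y) ∈ F ∧ x ≠ y) := by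
  simp [addEdges, SimpleGraph.fromEdgeSet_adj]

/-- Sunflower rule for claws: if more than `k` claws share the two leaves
`u, v` but have pairwise distinct third leaves, then every `k`-completion of
`G` contains the pair `uv`. -/
theorem sunflower_claws [Fintype V] (G : SimpleGraph V) (k : ℕ) (hk : 0 < k)
    (u v : V) (hne : u ≠ v) (huv : ¬ G.Adj u v)
    (W : Finset V) (hW : k < W.card)
    (hclaw : ∀ w ∈ W, ∃ c, IsClaw G c u v w) :
    ∀ F : Finset (Sym2 V), IsKCompletion G k F → s(u, v) ∈ F := by
  classical
  rintro F ⟨⟨hdiag, hnew, hpig⟩, hcard⟩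
  by_contra huvF
  -- each w ∈ W contributes an edge s(u,w) or s(v,w) to F
  have key : ∀ w ∈ W, s(u, w) ∈ F ∨ s(v, w) ∈ F := by
    intro w hw
    by_contra hno
    push_neg at hno
    obtain ⟨c, h1, h2, h3, h12, h13, h23, n12, n13, n23⟩ := hclaw w hw
    refine noClaw_of_pig hpig (c := c) (l₁ := u) (l₂ := v) (l₃ := w) ?_
    refine ⟨addEdges_adj.2 (Or.inl h1), addEdges_adj.2 (Or.inl h2),
      addEdges_adj.2 (Or.inl h3), ?_, ?_, ?_, n12, n13, n23⟩
    · intro h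
      rcases addEdges_adj.1 h with h | ⟨h, _⟩
      · exact h12 h
      · exact huvF h
    · intro h
      rcases addEdges_adj.1 h with h | ⟨h, _⟩
      · exact h13 h
      · exact hno.1 h
    · intro h
      rcases addEdges_adj.1 h with h | ⟨h, _⟩
      · exact h23 h
      · exact hno.2 h
  have hwne : ∀ w ∈ W, w ≠ u ∧ w ≠ v := by
    intro w hw
    obtain ⟨c, hc⟩ := hclaw w hw
    exact ⟨fun h => hc.2.2.2.2.2.2.2.1 h.symm, fun h => hc.2.2.2.2.2.2.2.2 h.symm⟩
  -- injection from W into F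
  have hle : W.card ≤ F.card := by
    refine Finset.card_le_card_of_injOn
      (fun w => if s(u, w) ∈ F then s(u, w) else s(v, w)) ?_ ?_
    · intro w hw
      by_cases h : s(u, w) ∈ F
      · simp [h]
      · simp only [h, if_false]
        exact (key w hw).resolve_left h
    · intro w hw w' hw' heq
      obtain ⟨hwu, hwv⟩ := hwne w hw
      obtain ⟨hw'u, hw'v⟩ := hwne w' hw'
      dsimp only at heq
      split_ifs at heq <;>
        rcases Sym2.eq_iff.1 heq with ⟨ha, hb⟩ | ⟨ha, hb⟩ <;>
        first
          | exact hb
          | exact absurd ha.symm hne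
          | exact absurd ha hne
          | exact absurd hb.symm hwv
          | exact absurd hb.symm hwu
          | exact absurd ha.symm hw'v
          | exact absurd ha.symm hw'u
          | (subst ha; exact absurd hb.symm hwv)
          | (subst hb; exact absurd ha hw'u.symm)
  omega
end

section
/- Let G = (V,E) be a finite simple graph, k a positive integer, and u, v two nonadjacent vertices of G. Suppose there exist m > k pairwise distinct induced 4-cycles of G, each containing both u and v (as a nonadjacent pair of the cycle). Then every k-completion F of G contains the pair uv. -/
open SimpleGraph Finset

variable {V : Type*}

lemma c4_rot {G : SimpleGraph V} {a b c d : V} (h : IsInducedC4 G a b c d) :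
    IsInducedC4 G b c d a := by
  obtain ⟨h1, h2, h3, h4, h5, h6, h7, h8⟩ := h
  exact ⟨h2, h3, h4, h1, h6, fun h => h5 h.symm, h8, h7.symm⟩

lemma min_case {G : SimpleGraph V} {f : V → ℕ} (hf : IsUmbrellaOrdering G f)
    {a b c d : V} (h : IsInducedC4 G a b c d)
    (hab : f a < f b) (hac : f a < f c) (had : f a < f d) : False := by
  obtain ⟨hinj, humb⟩ := hf
  obtain ⟨h1, h2, h3, h4, h5, h6, h7, h8⟩ := h
  have hbc : f b < f c := by
    rcases lt_trichotomy (f b) (f c) with h | h | h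
    · exact h
    · exact absurd (hinj h) h2.ne
    · exact absurd (humb a c b hac h h1).1 h5
  have hdc : f d < f c := by
    rcases lt_trichotomy (f d) (f c) with h | h | h
    · exact h
    · exact absurd (hinj h) h3.ne'
    · exact absurd (humb a c d hac h h4.symm).1 h5
  rcases lt_trichotomy (f b) (f d) with h | h | h
  · exact h6 (humb b d c h hdc h2).1
  · exact h8 (hinj h)
  · exact h6 ((humb a d b had h h1).2).symm

lemma no_c4 {G : SimpleGraph V} (hG : IsProperIntervalGraph G)
    {a b c d : V} (h : IsInducedC4 G a b c d) : False := by
  obtain ⟨f, hf⟩ := hG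
  have hinj := hf.1
  obtain ⟨h1, h2, h3, h4, h5, h6, h7, h8⟩ := h
  have nab : f a ≠ f b := fun h' => h1.ne (hinj h')
  have nac : f a ≠ f c := fun h' => h7 (hinj h')
  have nad : f a ≠ f d := fun h' => h4.ne' (hinj h')
  have nbc : f b ≠ f c := fun h' => h2.ne (hinj h')
  have nbd : f b ≠ f d := fun h' => h8 (hinj h')
  have ncd : f c ≠ f d := fun h' => h3.ne (hinj h')
  have hC : IsInducedC4 G a b c d := ⟨h1, h2, h3, h4, h5, h6, h7, h8⟩
  have hm : (f a < f b ∧ f a < f c ∧ f a < f d) ∨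
      (f b < f c ∧ f b < f d ∧ f b < f a) ∨
      (f c < f d ∧ f c < f a ∧ f c < f b) ∨
      (f d < f a ∧ f d < f b ∧ f d < f c) := by omega
  rcases hm with ⟨x, y, z⟩ | ⟨x, y, z⟩ | ⟨x, y, z⟩ | ⟨x, y, z⟩
  · exact min_case hf hC x y z
  · exact min_case hf (c4_rot hC) x y z
  · exact min_case hf (c4_rot (c4_rot hC)) x y z
  · exact min_case hf (c4_rot (c4_rot (c4_rot hC))) x y z

/-- Sunflower rule for 4-cycles: if more than `k` pairwise distinct induced
4-cycles contain `u` and `v` as a nonadjacent pair, then every `k`-completion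
of `G` contains the pair `uv`. -/
theorem sunflower_c4 [Fintype V] (G : SimpleGraph V) (k : ℕ) (hk : 0 < k)
    (u v : V) (hne : u ≠ v) (huv : ¬ G.Adj u v)
    (S : Finset (Sym2 V)) (hS : k < S.card)
    (hc4 : ∀ e ∈ S, ∃ a b : V, e = s(a, b) ∧ IsInducedC4 G u a v b) :
    ∀ F : Finset (Sym2 V), IsKCompletion G k F → s(u, v) ∈ F := by
  intro F hF
  by_contra huvF
  obtain ⟨⟨hdiag, hnotE, hPIG⟩, hcard⟩ := hF
  have hadj : ∀ x y : V, (addEdges G F).Adj x y ↔ G.Adj x y ∨ (s(x, y) ∈ F ∧ x ≠ y) := by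
    intro x y
    simp [addEdges, SimpleGraph.fromEdgeSet_adj]
  have hsub : S ⊆ F := by
    intro e he
    obtain ⟨a, b, rfl, hC4⟩ := hc4 e he
    by_contra habF
    obtain ⟨h1, h2, h3, h4, h5, h6, h7, h8⟩ := hC4
    refine no_c4 hPIG (a := u) (b := a) (c := v) (d := b)
      ⟨(hadj u a).2 (Or.inl h1), (hadj a v).2 (Or.inl h2),
       (hadj v b).2 (Or.inl h3), (hadj b u).2 (Or.inl h4), ?_, ?_, h7, h8⟩
    · intro hc
      rcases (hadj u v).1 hc with hc | ⟨hc, _⟩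
      · exact huv hc
      · exact huvF hc
    · intro hc
      rcases (hadj a b).1 hc with hc | ⟨hc, _⟩
      · exact h6 hc
      · exact habF hc
  have := Finset.card_le_card hsub
  omega
end

section
/- Let G = (V,E) be a finite simple graph admitting a k-completion, and suppose G is sunflower-reduced. Then: (i) the claws of G have at most k^2 pairwise distinct leaf sets; (ii) at most k^2 + 2k vertices of G are leaves of claws of G; and (iii) at most 2k^2 + 2k vertices of G belong to induced 4-cycles of G. -/
/-!
An umbrella ordering admits neither a claw nor an induced 4-cycle: two neighbours on the same
side of a vertex are adjacent. Hence every claw of `G` has a pair of leaves in the completion `F`,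
and every induced 4-cycle has a diagonal in `F`. For each of the at most `k` pairs of `F`,
sunflower-reducedness leaves at most `k` possible third leaves, resp. at most `k` opposite
diagonals. The claw leaves and 4-cycle vertices are therefore covered by the at most `2k`
endpoints of `F` together with these third leaves, resp. endpoints of opposite diagonals.
-/

open SimpleGraph Finset

variable {V : Type*}

lemma Set.Finite.ncard_biUnion_le_mul {ι α : Type*} {t : Set ι} (ht : t.Finite)
    {s : ι → Set α} {m : ℕ} (hs : ∀ i ∈ t, (s i).ncard ≤ m) :
    (⋃ i ∈ t, s i).ncard ≤ t.ncard * m := by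
  lift t to Finset ι using ht
  rw [Set.ncard_coe_finset, ← smul_eq_mul]
  exact (t.set_ncard_biUnion_le s).trans (Finset.sum_le_card_nsmul t _ m hs)

lemma Sym2.ncard_coe_le_two {α : Type*} (e : Sym2 α) : (e : Set α).ncard ≤ 2 := by
  induction e using Sym2.ind with
  | _ u v =>
    rw [Sym2.coe_mk]
    exact (Set.ncard_insert_le u {v}).trans (by rw [Set.ncard_singleton])

lemma ncard_biUnion_sym2_le {α : Type*} (F : Finset (Sym2 α)) :
    (⋃ e ∈ (F : Set (Sym2 α)), (e : Set α)).ncard ≤ F.card * 2 := by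
  simpa using F.finite_toSet.ncard_biUnion_le_mul fun e _ => e.ncard_coe_le_two

section Obstructions

variable {G : SimpleGraph V}

lemma IsClaw.swap_leaves {c l₁ l₂ l₃ : V} (h : IsClaw G c l₁ l₂ l₃) :
    IsClaw G c l₂ l₁ l₃ := by
  obtain ⟨h1, h2, h3, n12, n13, n23, d12, d13, d23⟩ := h
  exact ⟨h2, h1, h3, fun h' => n12 h'.symm, n23, n13, d12.symm, d23, d13⟩

lemma IsClaw.rotate_leaves {c l₁ l₂ l₃ : V} (h : IsClaw G c l₁ l₂ l₃) :
    IsClaw G c l₂ l₃ l₁ := by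
  obtain ⟨h1, h2, h3, n12, n13, n23, d12, d13, d23⟩ := h
  exact ⟨h2, h3, h1, n23, fun h' => n12 h'.symm, fun h' => n13 h'.symm,
    d23, d12.symm, d13.symm⟩

lemma IsInducedC4.rotate {a b c d : V} (h : IsInducedC4 G a b c d) :
    IsInducedC4 G b c d a := by
  obtain ⟨hab, hbc, hcd, hda, hac, hbd, hac', hbd'⟩ := h
  exact ⟨hbc, hcd, hda, hab, hbd, fun h' => hac h'.symm, hbd', hac'.symm⟩

lemma inC4_iff {x : V} : InC4 G x ↔ ∃ b c d, IsInducedC4 G x b c d := by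
  refine ⟨?_, fun ⟨b, c, d, h⟩ => ⟨x, b, c, d, h, .inl rfl⟩⟩
  rintro ⟨a, b, c, d, h, rfl | rfl | rfl | rfl⟩
  exacts [⟨b, c, d, h⟩, ⟨c, d, a, h.rotate⟩, ⟨d, a, b, h.rotate.rotate⟩,
    ⟨a, b, c, h.rotate.rotate.rotate⟩]

end Obstructions

namespace IsUmbrellaOrdering

variable {G : SimpleGraph V} {f : V → ℕ}

lemma adj_of_same_side (hf : IsUmbrellaOrdering G f) {x y z : V}
    (hxy : G.Adj x y) (hxz : G.Adj x z) (hyz : y ≠ z) (hside : f x < f y ↔ f x < f z) :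
    G.Adj y z := by
  have hy : f y ≠ f x := fun h => hxy.ne (hf.1 h).symm
  have hz : f z ≠ f x := fun h => hxz.ne (hf.1 h).symm
  have hyz' : f y ≠ f z := fun h => hyz (hf.1 h)
  by_cases hx : f x < f y
  · rcases hyz'.lt_or_gt with h | h
    · exact (hf.2 x y z hx h hxz).2
    · exact (hf.2 x z y (hside.mp hx) h hxy).2.symm
  · have hx' := hside.not.mp hx
    rcases hyz'.lt_or_gt with h | h
    · exact (hf.2 y z x h (by omega) hxy.symm).1
    · exact (hf.2 z y x h (by omega) hxz.symm).1.symm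

lemma not_isClaw (hf : IsUmbrellaOrdering G f) {c l₁ l₂ l₃ : V} :
    ¬ IsClaw G c l₁ l₂ l₃ := by
  rintro ⟨h1, h2, h3, n12, n13, n23, d12, d13, d23⟩
  have : (f c < f l₁ ↔ f c < f l₂) ∨ (f c < f l₁ ↔ f c < f l₃) ∨
      (f c < f l₂ ↔ f c < f l₃) := by tauto
  rcases this with h | h | h
  exacts [n12 (hf.adj_of_same_side h1 h2 d12 h), n13 (hf.adj_of_same_side h1 h3 d13 h),
    n23 (hf.adj_of_same_side h2 h3 d23 h)]

lemma not_isInducedC4 (hf : IsUmbrellaOrdering G f) {a b c d : V} :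
    ¬ IsInducedC4 G a b c d := by
  rintro ⟨hab, hbc, hcd, hda, hac, hbd, hac', hbd'⟩
  have between {x y z : V} (hxy : G.Adj x y) (hxz : G.Adj x z) (hyz : y ≠ z)
      (hn : ¬ G.Adj y z) : ¬ (f x < f y ↔ f x < f z) :=
    fun h => hn (hf.adj_of_same_side hxy hxz hyz h)
  have ha := between hab hda.symm hbd' hbd
  have hb := between hab.symm hbc hac' hac
  have hc := between hbc.symm hcd hbd' hbd
  have hd := between hcd.symm hda hac'.symm (fun h => hac h.symm)
  -- every vertex of the cycle lies strictly between its two cycle neighbours: impossible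
  omega

end IsUmbrellaOrdering

section Completion

variable {G : SimpleGraph V} {F : Finset (Sym2 V)}

lemma not_adj_addEdges {x y : V} (h : ¬ G.Adj x y) (hF : s(x, y) ∉ F) :
    ¬ (addEdges G F).Adj x y := by
  simp [addEdges, h, hF]

lemma IsClaw.exists_leaf_pair_mem {c l₁ l₂ l₃ : V} (h : IsClaw G c l₁ l₂ l₃)
    (hPI : IsProperIntervalGraph (addEdges G F)) :
    s(l₁, l₂) ∈ F ∨ s(l₁, l₃) ∈ F ∨ s(l₂, l₃) ∈ F := by
  obtain ⟨f, hf⟩ := hPI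
  by_contra! hmem
  obtain ⟨h1, h2, h3, n12, n13, n23, d12, d13, d23⟩ := h
  have hle : G ≤ addEdges G F := le_sup_left
  exact hf.not_isClaw ⟨hle h1, hle h2, hle h3, not_adj_addEdges n12 hmem.1,
    not_adj_addEdges n13 hmem.2.1, not_adj_addEdges n23 hmem.2.2, d12, d13, d23⟩

lemma IsInducedC4.diagonal_mem {a b c d : V} (h : IsInducedC4 G a b c d)
    (hPI : IsProperIntervalGraph (addEdges G F)) : s(a, c) ∈ F ∨ s(b, d) ∈ F := by
  obtain ⟨f, hf⟩ := hPI
  by_contra! hmem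
  obtain ⟨hab, hbc, hcd, hda, hac, hbd, hac', hbd'⟩ := h
  have hle : G ≤ addEdges G F := le_sup_left
  exact hf.not_isInducedC4 ⟨hle hab, hle hbc, hle hcd, hle hda,
    not_adj_addEdges hac hmem.1, not_adj_addEdges hbd hmem.2, hac', hbd'⟩

end Completion

def clawThirdLeaves (G : SimpleGraph V) (e : Sym2 V) : Set V :=
  {w | ∃ c u v, e = s(u, v) ∧ IsClaw G c u v w}

def oppositeC4Diagonals (G : SimpleGraph V) (e : Sym2 V) : Set (Sym2 V) :=
  {d | ∃ u v a b, e = s(u, v) ∧ d = s(a, b) ∧ IsInducedC4 G u a v b}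

section Sunflower

variable {G : SimpleGraph V}

lemma clawThirdLeaves_mk (u v : V) :
    clawThirdLeaves G s(u, v) = {w | ∃ c, IsClaw G c u v w} := by
  ext w
  refine ⟨?_, fun ⟨c, h⟩ => ⟨c, u, v, rfl, h⟩⟩
  rintro ⟨c, u', v', huv, h⟩
  rcases Sym2.eq_iff.mp huv with ⟨rfl, rfl⟩ | ⟨rfl, rfl⟩
  exacts [⟨c, h⟩, ⟨c, h.swap_leaves⟩]

lemma oppositeC4Diagonals_mk (u v : V) :
    oppositeC4Diagonals G s(u, v) = {d | ∃ a b, d = s(a, b) ∧ IsInducedC4 G u a v b} := by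
  ext d
  refine ⟨?_, fun ⟨a, b, hd, h⟩ => ⟨u, v, a, b, rfl, hd, h⟩⟩
  rintro ⟨u', v', a, b, huv, rfl, h⟩
  rcases Sym2.eq_iff.mp huv with ⟨rfl, rfl⟩ | ⟨rfl, rfl⟩
  exacts [⟨a, b, rfl, h⟩, ⟨b, a, Sym2.eq_swap, h.rotate.rotate⟩]

variable {k : ℕ} {e : Sym2 V}

lemma SunflowerReduced.ncard_clawThirdLeaves_le (hred : SunflowerReduced G k)
    (he : ¬ e.IsDiag) (heG : e ∉ G.edgeSet) : (clawThirdLeaves G e).ncard ≤ k := by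
  induction e using Sym2.ind with
  | _ u v =>
    rw [clawThirdLeaves_mk]
    exact (hred u v (by simpa using he) (by simpa using heG)).1

lemma SunflowerReduced.ncard_oppositeC4Diagonals_le (hred : SunflowerReduced G k)
    (he : ¬ e.IsDiag) (heG : e ∉ G.edgeSet) : (oppositeC4Diagonals G e).ncard ≤ k := by
  induction e using Sym2.ind with
  | _ u v =>
    rw [oppositeC4Diagonals_mk]
    exact (hred u v (by simpa using he) (by simpa using heG)).2

end Sunflower

section Counting

variable {G : SimpleGraph V} {F : Finset (Sym2 V)}

lemma IsClaw.exists_mem_clawThirdLeaves {c l₁ l₂ l₃ : V} (h : IsClaw G c l₁ l₂ l₃)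
    (hPI : IsProperIntervalGraph (addEdges G F)) :
    ∃ e ∈ F, ∃ w ∈ clawThirdLeaves G e, ({l₁, l₂, l₃} : Set V) = insert w (e : Set V) := by
  rcases h.exists_leaf_pair_mem hPI with hm | hm | hm
  · exact ⟨_, hm, l₃, ⟨c, l₁, l₂, rfl, h⟩, by ext; simp; tauto⟩
  · exact ⟨_, hm, l₂, ⟨c, l₁, l₃, rfl, h.swap_leaves.rotate_leaves⟩, by ext; simp; tauto⟩
  · exact ⟨_, hm, l₁, ⟨c, l₂, l₃, rfl, h.rotate_leaves⟩, by ext; simp⟩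

variable [Finite V] {k : ℕ} (hF : IsCompletion G F) (hred : SunflowerReduced G k)
include hF hred

lemma ncard_clawLeafSets_le :
    {S : Set V | ∃ c l₁ l₂ l₃ : V, IsClaw G c l₁ l₂ l₃ ∧ S = {l₁, l₂, l₃}}.ncard ≤
      F.card * k := by
  have hcover : {S : Set V | ∃ c l₁ l₂ l₃ : V, IsClaw G c l₁ l₂ l₃ ∧ S = {l₁, l₂, l₃}} ⊆
      ⋃ e ∈ (F : Set (Sym2 V)), (fun w => insert w (e : Set V)) '' clawThirdLeaves G e := by
    rintro S ⟨c, l₁, l₂, l₃, h, rfl⟩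
    obtain ⟨e, he, w, hw, hS⟩ := h.exists_mem_clawThirdLeaves hF.2.2
    exact Set.mem_biUnion he ⟨w, hw, hS.symm⟩
  calc _ ≤ _ := Set.ncard_le_ncard hcover (Set.toFinite _)
    _ ≤ F.card * k := by
      simpa using F.finite_toSet.ncard_biUnion_le_mul fun e he =>
        (Set.ncard_image_le (Set.toFinite _)).trans
          (hred.ncard_clawThirdLeaves_le (hF.1 e he) (hF.2.1 e he))

lemma ncard_clawLeaves_le :
    {w : V | ∃ c l₂ l₃ : V, IsClaw G c w l₂ l₃}.ncard ≤ F.card * 2 + F.card * k := by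
  have hcover : {w : V | ∃ c l₂ l₃ : V, IsClaw G c w l₂ l₃} ⊆
      (⋃ e ∈ (F : Set (Sym2 V)), (e : Set V)) ∪
        ⋃ e ∈ (F : Set (Sym2 V)), clawThirdLeaves G e := by
    rintro l₁ ⟨c, l₂, l₃, h⟩
    obtain ⟨e, he, w, hw, hS⟩ := h.exists_mem_clawThirdLeaves hF.2.2
    have hl₁ : l₁ ∈ insert w (e : Set V) := hS ▸ Set.mem_insert l₁ _
    rcases hl₁ with rfl | hl₁
    exacts [Or.inr (Set.mem_biUnion he hw), Or.inl (Set.mem_biUnion he hl₁)]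
  calc _ ≤ _ := Set.ncard_le_ncard hcover (Set.toFinite _)
    _ ≤ _ := Set.ncard_union_le _ _
    _ ≤ F.card * 2 + F.card * k := by
      refine add_le_add (ncard_biUnion_sym2_le F) ?_
      simpa using F.finite_toSet.ncard_biUnion_le_mul fun e he =>
        hred.ncard_clawThirdLeaves_le (hF.1 e he) (hF.2.1 e he)

lemma ncard_inC4_le :
    {x : V | InC4 G x}.ncard ≤ F.card * 2 + F.card * (k * 2) := by
  have hcover : {x : V | InC4 G x} ⊆
      (⋃ e ∈ (F : Set (Sym2 V)), (e : Set V)) ∪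
        ⋃ e ∈ (F : Set (Sym2 V)), ⋃ d ∈ oppositeC4Diagonals G e, (d : Set V) := by
    intro a ha
    obtain ⟨b, c, d, h⟩ := inC4_iff.mp ha
    rcases h.diagonal_mem hF.2.2 with hm | hm
    · exact Or.inl (Set.mem_biUnion hm (Sym2.mem_mk_left a c))
    · exact Or.inr (Set.mem_biUnion hm
        (Set.mem_biUnion ⟨b, d, c, a, rfl, rfl, h.rotate⟩ (Sym2.mem_mk_right c a)))
  calc _ ≤ _ := Set.ncard_le_ncard hcover (Set.toFinite _)
    _ ≤ _ := Set.ncard_union_le _ _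
    _ ≤ F.card * 2 + F.card * (k * 2) := by
      refine add_le_add (ncard_biUnion_sym2_le F) ?_
      simpa using F.finite_toSet.ncard_biUnion_le_mul fun e he =>
        ((Set.toFinite _).ncard_biUnion_le_mul fun d _ => d.ncard_coe_le_two).trans
          (Nat.mul_le_mul_right 2
            (hred.ncard_oppositeC4Diagonals_le (hF.1 e he) (hF.2.1 e he)))

end Counting

/-- In a sunflower-reduced positive instance: at most `k²` distinct leaf sets
of claws, at most `k² + 2k` vertices are leaves of claws, and at most
`2k² + 2k` vertices belong to induced 4-cycles. -/
theorem few_claws_and_c4 [Fintype V] (G : SimpleGraph V) (k : ℕ)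
    (hpos : ∃ F : Finset (Sym2 V), IsKCompletion G k F)
    (hred : SunflowerReduced G k) :
    {S : Set V | ∃ c l₁ l₂ l₃ : V, IsClaw G c l₁ l₂ l₃ ∧
        S = {l₁, l₂, l₃}}.ncard ≤ k ^ 2 ∧
    {w : V | ∃ c l₂ l₃ : V, IsClaw G c w l₂ l₃}.ncard ≤ k ^ 2 + 2 * k ∧
    {x : V | InC4 G x}.ncard ≤ 2 * k ^ 2 + 2 * k := by
  obtain ⟨F, hF, hFk⟩ := hpos
  have hFk' : F.card * k ≤ k * k := Nat.mul_le_mul_right k hFk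
  refine ⟨?_, ?_, ?_⟩
  · linarith [ncard_clawLeafSets_le hF hred]
  · linarith [ncard_clawLeaves_le hF hred]
  · linarith [ncard_inC4_le hF hred]
end

section
/- Let G = (V,E) be a finite simple graph and B a clean K-join of G with ordering b_1, …, b_p and associated partition N, L, R, C of V ∖ B. Then L is a clique of G and R is a clique of G. -/
open SimpleGraph Finset

variable {V : Type*}

/-- For a clean `K`-join of `G` with associated partition `N, L, R, C`, both
`L` and `R` are cliques of `G`. -/
theorem clean_kjoin_sides_are_cliques [Fintype V] (G : SimpleGraph V)
    (p : ℕ) (b : Fin p → V) (N L R C : Set V)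
    (h : KJoinWith G b N L R C)
    (hclean : ∀ i : Fin p, ¬ InClaw G (b i) ∧ ¬ InC4 G (b i)) :
    G.IsClique L ∧ G.IsClique R := by
  have hdis := h.disj
  simp only [List.pairwise_cons, List.mem_cons, List.not_mem_nil,
    List.mem_singleton] at hdis
  have hBL : ∀ i : Fin p, b i ∉ L := by
    intro i hi
    exact (hdis.1 L (by tauto)).le_bot ⟨Set.mem_range_self i, hi⟩
  have hBR : ∀ i : Fin p, b i ∉ R := by
    intro i hi
    exact (hdis.1 R (by tauto)).le_bot ⟨Set.mem_range_self i, hi⟩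
  constructor
  · -- L is a clique
    intro x hx y hy hxy
    by_contra hnadj
    obtain ⟨i, hi⟩ := h.lrAdj x (Or.inl hx)
    have hp : 0 < p := i.pos
    -- propagate adjacency down to index 0
    have lDown : ∀ (n : ℕ) (j : Fin p), j.val = n → ∀ v ∈ L, G.Adj v (b j) →
        G.Adj v (b ⟨0, hp⟩) := by
      intro n
      induction n with
      | zero =>
        intro j hj v _ hadj
        have : j = ⟨0, hp⟩ := Fin.ext hj
        rwa [this] at hadj
      | succ m ih =>
        intro j hj v hv hadj
        have hm : m < p := by omega
        have := h.lMono ⟨m, hm⟩ j (show m + 1 = j.val by omega) v hv hadj.symm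
        exact ih ⟨m, hm⟩ rfl v hv this.symm
    have hx0 : G.Adj x (b ⟨0, hp⟩) := lDown i.val i rfl x hx hi
    obtain ⟨i', hi'⟩ := h.lrAdj y (Or.inl hy)
    have hy0 : G.Adj y (b ⟨0, hp⟩) := lDown i'.val i' rfl y hy hi'
    set last : Fin p := ⟨p - 1, Nat.sub_lt hp Nat.one_pos⟩ with hlast
    have hxl : ¬ G.Adj x (b last) := h.lLast x hx last rfl
    have hyl : ¬ G.Adj y (b last) := h.lLast y hy last rfl
    have hne : (⟨0, hp⟩ : Fin p) ≠ last := by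
      intro e
      exact hxl (e ▸ hx0)
    have claw : IsClaw G (b ⟨0, hp⟩) (b last) x y :=
      ⟨h.clique _ _ hne, hx0.symm, hy0.symm,
        fun a => hxl a.symm, fun a => hyl a.symm, hnadj,
        fun e => hBL last (e ▸ hx), fun e => hBL last (e ▸ hy), hxy⟩
    exact (hclean ⟨0, hp⟩).1 ⟨b ⟨0, hp⟩, b last, x, y, claw, Or.inl rfl⟩
  · -- R is a clique
    intro x hx y hy hxy
    by_contra hnadj
    obtain ⟨i, hi⟩ := h.lrAdj x (Or.inr hx)
    have hp : 0 < p := i.pos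
    set last : Fin p := ⟨p - 1, Nat.sub_lt hp Nat.one_pos⟩ with hlast
    -- propagate adjacency up to the last index
    have rUp : ∀ (d : ℕ) (j : Fin p), p - 1 - j.val = d → ∀ r ∈ R,
        G.Adj r (b j) → G.Adj r (b last) := by
      intro d
      induction d with
      | zero =>
        intro j hj r _ hadj
        have : j = last := Fin.ext (show j.val = p - 1 by omega)
        rwa [this] at hadj
      | succ m ih =>
        intro j hj r hr hadj
        have hm : j.val + 1 < p := by omega
        have := h.rMono j ⟨j.val + 1, hm⟩ rfl r hr hadj.symm
        exact ih ⟨j.val + 1, hm⟩ (show p - 1 - (j.val + 1) = m by omega) r hr this.symm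
    have hxl : G.Adj x (b last) := rUp _ i rfl x hx hi
    obtain ⟨i', hi'⟩ := h.lrAdj y (Or.inr hy)
    have hyl : G.Adj y (b last) := rUp _ i' rfl y hy hi'
    have hx0 : ¬ G.Adj x (b ⟨0, hp⟩) := h.rFirst x hx ⟨0, hp⟩ rfl
    have hy0 : ¬ G.Adj y (b ⟨0, hp⟩) := h.rFirst y hy ⟨0, hp⟩ rfl
    have hne : last ≠ (⟨0, hp⟩ : Fin p) := by
      intro e
      exact hx0 (e ▸ hxl)
    have claw : IsClaw G (b last) (b ⟨0, hp⟩) x y :=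
      ⟨h.clique _ _ hne, hxl.symm, hyl.symm,
        fun a => hx0 a.symm, fun a => hy0 a.symm, hnadj,
        fun e => hBR ⟨0, hp⟩ (e ▸ hx), fun e => hBR ⟨0, hp⟩ (e ▸ hy), hxy⟩
    exact (hclean last).1 ⟨b last, b ⟨0, hp⟩, x, y, claw, Or.inl rfl⟩
end
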